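/- arXiv:1509.01915 — 2 statements merged into one kernel-verified Lean document; each statement's English description precedes it below -/
import Mathlib

section
/- For every r ∈ (0,1), the Landen transformation identity K(2√r/(1+r)) = (1+r) K(r) holds. -/
noncomputable def ellK (r : ℝ) : ℝ :=
  ∫ t in (0)..(Real.pi / 2), 1 / Real.sqrt (1 - r ^ 2 * Real.sin t ^ 2)

noncomputable def ellE (r : ℝ) : ℝ :=
  ∫ t in (0)..(Real.pi / 2), Real.sqrt (1 - r ^ 2 * Real.sin t ^ 2)


open Real Set intervalIntegral

noncomputable def lS (r θ : ℝ) : ℝ := (1 + r) * Real.sin θ / (1 + r * Real.sin θ ^ 2)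

noncomputable def lP (r θ : ℝ) : ℝ :=
  (1 + r) * (1 - r * Real.sin θ ^ 2) /
    ((1 + r * Real.sin θ ^ 2) * Real.sqrt (1 - r ^ 2 * Real.sin θ ^ 2))

noncomputable def lG (r x : ℝ) : ℝ := 1 / Real.sqrt (1 - 4 * r / (1 + r) ^ 2 * Real.sin x ^ 2)

noncomputable def lH (r θ : ℝ) : ℝ := 1 / Real.sqrt (1 - r ^ 2 * Real.sin θ ^ 2)

lemma lA_pos {r : ℝ} (hr0 : 0 < r) (hr1 : r < 1) (θ : ℝ) : 0 < 1 - r ^ 2 * Real.sin θ ^ 2 := by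
  nlinarith [Real.sin_sq_le_one θ, sq_nonneg (Real.sin θ)]

lemma lB_pos {r : ℝ} (hr0 : 0 < r) (hr1 : r < 1) (θ : ℝ) :
    0 < 1 - 4 * r / (1 + r) ^ 2 * Real.sin θ ^ 2 := by
  have h1 : 4 * r / (1 + r) ^ 2 < 1 := by
    rw [div_lt_one (by positivity)]
    nlinarith [sq_nonneg (1 - r)]
  nlinarith [Real.sin_sq_le_one θ, sq_nonneg (Real.sin θ),
    div_nonneg (by linarith : (0:ℝ) ≤ 4 * r) (by positivity : (0:ℝ) ≤ (1 + r) ^ 2)]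

lemma lDen_pos {r : ℝ} (hr0 : 0 < r) (θ : ℝ) : 0 < 1 + r * Real.sin θ ^ 2 := by positivity

lemma lG_cont {r : ℝ} (hr0 : 0 < r) (hr1 : r < 1) : Continuous (lG r) := by
  apply continuous_const.div (Real.continuous_sqrt.comp (by fun_prop))
  exact fun x => (Real.sqrt_pos.mpr (lB_pos hr0 hr1 x)).ne'

lemma lH_cont {r : ℝ} (hr0 : 0 < r) (hr1 : r < 1) : Continuous (lH r) := by
  apply continuous_const.div (Real.continuous_sqrt.comp (by fun_prop))
  exact fun x => (Real.sqrt_pos.mpr (lA_pos hr0 hr1 x)).ne'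

lemma lS_cont {r : ℝ} (hr0 : 0 < r) : Continuous (lS r) := by
  apply Continuous.div (by fun_prop) (by fun_prop)
  exact fun θ => (lDen_pos hr0 θ).ne'

lemma lP_cont {r : ℝ} (hr0 : 0 < r) (hr1 : r < 1) : Continuous (lP r) := by
  apply Continuous.div (by fun_prop)
  · exact Continuous.mul (by fun_prop) (Real.continuous_sqrt.comp (by fun_prop))
  · exact fun θ => (mul_pos (lDen_pos hr0 θ) (Real.sqrt_pos.mpr (lA_pos hr0 hr1 θ))).ne'

lemma lS_mem {r : ℝ} (hr0 : 0 < r) (hr1 : r < 1) {x : ℝ} (hu0 : 0 ≤ Real.sin x)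
    (hu1 : Real.sin x < 1) : 0 ≤ lS r x ∧ lS r x < 1 := by
  have hd := lDen_pos hr0 x
  constructor
  · exact div_nonneg (by positivity) hd.le
  · rw [lS, div_lt_one hd]
    nlinarith [mul_pos (sub_pos.mpr hu1) (by nlinarith : (0:ℝ) < 1 - r * Real.sin x)]

lemma lderiv {r : ℝ} (hr0 : 0 < r) (hr1 : r < 1) {x : ℝ} (hu0 : 0 ≤ Real.sin x)
    (hu1 : Real.sin x < 1) (hc : 0 < Real.cos x) :
    HasDerivAt (fun θ => Real.arcsin (lS r θ)) (lP r x) x := by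
  obtain ⟨hs0, hs1⟩ := lS_mem hr0 hr1 hu0 hu1
  have hdx := lDen_pos hr0 x
  have hAx := lA_pos hr0 hr1 x
  have hA0 : (0:ℝ) < Real.sqrt (1 - r ^ 2 * Real.sin x ^ 2) := Real.sqrt_pos.mpr hAx
  have hnum : HasDerivAt (fun θ => (1 + r) * Real.sin θ) ((1 + r) * Real.cos x) x :=
    (Real.hasDerivAt_sin x).const_mul _
  have hden' : HasDerivAt (fun θ => 1 + r * Real.sin θ ^ 2)
      (r * (2 * Real.sin x ^ 1 * Real.cos x)) x :=
    (((Real.hasDerivAt_sin x).pow 2).const_mul r).const_add 1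
  have hs' : HasDerivAt (lS r)
      (((1 + r) * Real.cos x * (1 + r * Real.sin x ^ 2) -
        (1 + r) * Real.sin x * (r * (2 * Real.sin x ^ 1 * Real.cos x))) /
        (1 + r * Real.sin x ^ 2) ^ 2) x := hnum.div hden' hdx.ne'
  have harc := (Real.hasDerivAt_arcsin (by linarith : lS r x ≠ -1) hs1.ne).comp x hs'
  have sqrt1 : Real.sqrt (1 - lS r x ^ 2) =
      Real.cos x * Real.sqrt (1 - r ^ 2 * Real.sin x ^ 2) / (1 + r * Real.sin x ^ 2) := by
    have hc2 : Real.cos x ^ 2 = 1 - Real.sin x ^ 2 := Real.cos_sq' x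
    have hA2 : Real.sqrt (1 - r ^ 2 * Real.sin x ^ 2) ^ 2 = 1 - r ^ 2 * Real.sin x ^ 2 :=
      Real.sq_sqrt hAx.le
    have h2 : 1 - lS r x ^ 2 =
        (Real.cos x * Real.sqrt (1 - r ^ 2 * Real.sin x ^ 2) / (1 + r * Real.sin x ^ 2)) ^ 2 := by
      rw [lS]
      field_simp
      nlinarith [hA2, hc2]
    rw [h2, Real.sqrt_sq (by positivity)]
  have hval : 1 / Real.sqrt (1 - lS r x ^ 2) *
      (((1 + r) * Real.cos x * (1 + r * Real.sin x ^ 2) -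
        (1 + r) * Real.sin x * (r * (2 * Real.sin x ^ 1 * Real.cos x))) /
        (1 + r * Real.sin x ^ 2) ^ 2) = lP r x := by
    rw [sqrt1, lP]
    field_simp
    ring
  rw [← hval]
  exact harc

lemma lpoint {r : ℝ} (hr0 : 0 < r) (hr1 : r < 1) {x : ℝ} (hu0 : 0 ≤ Real.sin x)
    (hu1 : Real.sin x < 1) :
    lP r x * lG r (Real.arcsin (lS r x)) = (1 + r) * lH r x := by
  obtain ⟨hs0, hs1⟩ := lS_mem hr0 hr1 hu0 hu1
  have hdx := lDen_pos hr0 x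
  have hAx := lA_pos hr0 hr1 x
  have hA0 : (0:ℝ) < Real.sqrt (1 - r ^ 2 * Real.sin x ^ 2) := Real.sqrt_pos.mpr hAx
  have hru : r * Real.sin x ^ 2 < 1 := by nlinarith [Real.sin_sq_le_one x]
  have hsin_arcsin : Real.sin (Real.arcsin (lS r x)) = lS r x :=
    Real.sin_arcsin (by linarith) hs1.le
  have hgφ : lG r (Real.arcsin (lS r x)) =
      (1 + r * Real.sin x ^ 2) / (1 - r * Real.sin x ^ 2) := by
    rw [lG, hsin_arcsin]
    have h2 : 1 - 4 * r / (1 + r) ^ 2 * lS r x ^ 2 =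
        ((1 - r * Real.sin x ^ 2) / (1 + r * Real.sin x ^ 2)) ^ 2 := by
      rw [lS]
      field_simp
      ring
    rw [h2, Real.sqrt_sq (div_nonneg (by linarith) hdx.le), one_div_div]
  rw [hgφ, lP, lH]
  have h1 : Real.sqrt (1 - r ^ 2 * Real.sin x ^ 2) ≠ 0 := hA0.ne'
  have h2 : (1 + r * Real.sin x ^ 2) ≠ 0 := hdx.ne'
  have h3 : (1 - r * Real.sin x ^ 2) ≠ 0 := (sub_pos.mpr hru).ne'
  field_simp

lemma lfacts {b : ℝ} (hb0 : 0 ≤ b) (hb2 : b < π / 2) {x : ℝ} (hx : x ∈ Icc (0:ℝ) b) :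
    0 ≤ Real.sin x ∧ Real.sin x < 1 ∧ 0 < Real.cos x := by
  obtain ⟨hx0, hxb⟩ := hx
  have hxpi : x < π / 2 := lt_of_le_of_lt hxb hb2
  refine ⟨Real.sin_nonneg_of_nonneg_of_le_pi hx0 (by linarith [Real.pi_pos]), ?_, ?_⟩
  · have := Real.strictMonoOn_sin
      (⟨by linarith [Real.pi_pos], by linarith⟩ : x ∈ Icc (-(π/2)) (π/2))
      (⟨by linarith [Real.pi_pos], le_refl _⟩ : π/2 ∈ Icc (-(π/2)) (π/2)) hxpi
    simpa [Real.sin_pi_div_two] using this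
  · exact Real.cos_pos_of_mem_Ioo ⟨by linarith [Real.pi_pos], hxpi⟩

lemma lkey {r : ℝ} (hr0 : 0 < r) (hr1 : r < 1) {b : ℝ} (hb : b ∈ Ico (0:ℝ) (π / 2)) :
    (1 + r) * ∫ θ in (0:ℝ)..b, lH r θ =
      ∫ x in (0:ℝ)..(Real.arcsin (lS r b)), lG r x := by
  obtain ⟨hb0, hb2⟩ := hb
  have huIcc : uIcc (0:ℝ) b = Icc 0 b := uIcc_of_le hb0
  have hderiv : ∀ x ∈ uIcc (0:ℝ) b,
      HasDerivAt (fun θ => Real.arcsin (lS r θ)) (lP r x) x := by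
    intro x hx
    rw [huIcc] at hx
    obtain ⟨hu0, hu1, hc⟩ := lfacts hb0 hb2 hx
    exact lderiv hr0 hr1 hu0 hu1 hc
  have hsub := intervalIntegral.integral_comp_smul_deriv hderiv
    ((lP_cont hr0 hr1).continuousOn) (lG_cont hr0 hr1)
  have hφ0 : Real.arcsin (lS r 0) = 0 := by simp [lS]
  rw [hφ0] at hsub
  have hcongr : ∀ x ∈ uIcc (0:ℝ) b,
      lP r x • ((lG r) ∘ (fun θ => Real.arcsin (lS r θ))) x = (1 + r) * lH r x := by
    intro x hx
    rw [huIcc] at hx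
    obtain ⟨hu0, hu1, _⟩ := lfacts hb0 hb2 hx
    rw [smul_eq_mul, Function.comp_apply]
    exact lpoint hr0 hr1 hu0 hu1
  rw [intervalIntegral.integral_congr hcongr] at hsub
  rw [← hsub, intervalIntegral.integral_const_mul]

theorem ellK_landen {r : ℝ} (hr : r ∈ Set.Ioo (0 : ℝ) 1) :
    ellK (2 * Real.sqrt r / (1 + r)) = (1 + r) * ellK r := by
  obtain ⟨hr0, hr1⟩ := hr
  have h1r : (0 : ℝ) < 1 + r := by linarith
  have hpi2 : (0 : ℝ) < π / 2 := by positivity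
  have hint_h : ∀ a b : ℝ, IntervalIntegrable (lH r) MeasureTheory.volume a b :=
    fun a b => (lH_cont hr0 hr1).intervalIntegrable a b
  have hint_g : ∀ a b : ℝ, IntervalIntegrable (lG r) MeasureTheory.volume a b :=
    fun a b => (lG_cont hr0 hr1).intervalIntegrable a b
  have L_cont : Continuous fun b => (1 + r) * ∫ θ in (0:ℝ)..b, lH r θ :=
    continuous_const.mul (intervalIntegral.continuous_primitive hint_h 0)
  have R_cont : Continuous fun b => ∫ x in (0:ℝ)..(Real.arcsin (lS r b)), lG r x :=
    (intervalIntegral.continuous_primitive hint_g 0).comp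
      (Real.continuous_arcsin.comp (lS_cont hr0))
  have hEq : Set.EqOn (fun b => (1 + r) * ∫ θ in (0:ℝ)..b, lH r θ)
      (fun b => ∫ x in (0:ℝ)..(Real.arcsin (lS r b)), lG r x) (Ico (0:ℝ) (π / 2)) :=
    fun b hb => lkey hr0 hr1 hb
  have hmem : π / 2 ∈ closure (Ico (0:ℝ) (π / 2)) := by
    rw [closure_Ico hpi2.ne]
    exact ⟨by linarith, le_refl _⟩
  have hfinal := (hEq.closure L_cont R_cont) hmem
  simp only at hfinal
  have hφpi : Real.arcsin (lS r (π / 2)) = π / 2 := by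
    rw [lS]
    simp only [Real.sin_pi_div_two, one_pow, mul_one]
    rw [div_self h1r.ne']
    exact Real.arcsin_one
  rw [hφpi] at hfinal
  have hk2 : (2 * Real.sqrt r / (1 + r)) ^ 2 = 4 * r / (1 + r) ^ 2 := by
    rw [div_pow, mul_pow, Real.sq_sqrt hr0.le]
    ring
  have hellKk : ellK (2 * Real.sqrt r / (1 + r)) = ∫ x in (0:ℝ)..(π / 2), lG r x := by
    rw [ellK]
    simp only [hk2, lG]
  have hellKr : ellK r = ∫ θ in (0:ℝ)..(π / 2), lH r θ := rfl
  rw [hellKk, hellKr, ← hfinal]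
end

section
/- Let r₀ = r ∈ (0,1) and r_{n} = 2√(r_{n−1})/(1 + r_{n−1}) for n ≥ 1. Then the sequence (r_n) is strictly increasing and converges to 1. -/
/-! Writing `x = s ^ 2`, one Landen step is `x ↦ 2 s / (1 + s ^ 2)`, and on `(0, 1)` it increases `x`
(as `s (1 + s ^ 2) < 2`) while staying below `1` (AM-GM). Moreover
`1 - 2 s / (1 + s ^ 2) = (1 - s) ^ 2 / (1 + s ^ 2) ≤ (1 - s) ^ 2 (1 + s) ^ 2 = (1 - x) ^ 2`,
so the defect `1 - rₙ` converges to `0` quadratically: `1 - rₙ ≤ (1 - r) ^ 2 ^ n`. -/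

noncomputable def landen (r : ℝ) : ℕ → ℝ
  | 0 => r
  | n + 1 => 2 * Real.sqrt (landen r n) / (1 + landen r n)

open Filter Topology

section LandenStep

variable {x : ℝ}

lemma two_mul_sqrt_lt_one_add (hx₀ : 0 ≤ x) (hx₁ : x ≠ 1) : 2 * √x < 1 + x := by
  have hs : √x ≠ 1 := by rwa [Ne, Real.sqrt_eq_one]
  nlinarith [Real.sq_sqrt hx₀, sq_pos_of_ne_zero (sub_ne_zero.mpr hs)]

lemma two_mul_sqrt_div_one_add_lt_one (hx₀ : 0 ≤ x) (hx₁ : x ≠ 1) : 2 * √x / (1 + x) < 1 :=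
  (div_lt_one (by linarith)).mpr (two_mul_sqrt_lt_one_add hx₀ hx₁)

lemma lt_two_mul_sqrt_div_one_add (hx₀ : 0 < x) (hx₁ : x < 1) : x < 2 * √x / (1 + x) := by
  have hs₀ : 0 < √x := Real.sqrt_pos.mpr hx₀
  have hs₁ : √x < 1 := by rw [Real.sqrt_lt' one_pos]; simpa using hx₁
  rw [lt_div_iff₀ (by linarith)]
  nlinarith [Real.sq_sqrt hx₀.le, mul_pos hs₀ (mul_pos (sub_pos.mpr hs₁) hs₀)]

lemma one_sub_two_mul_sqrt_div_one_add_le_sq (hx₀ : 0 ≤ x) :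
    1 - 2 * √x / (1 + x) ≤ (1 - x) ^ 2 := by
  have hs₀ : 0 ≤ √x := Real.sqrt_nonneg x
  rw [sub_div' (by linarith), div_le_iff₀ (by linarith)]
  nlinarith [Real.sq_sqrt hx₀, mul_nonneg (sq_nonneg (1 - √x)) (sq_nonneg √x),
    mul_nonneg (sq_nonneg (1 - √x)) hs₀,
    mul_nonneg (mul_nonneg (sq_nonneg (1 - √x)) hs₀) (sq_nonneg √x)]

end LandenStep

section LandenSequence

variable {r : ℝ}

lemma landen_succ (r : ℝ) (n : ℕ) :
    landen r (n + 1) = 2 * √(landen r n) / (1 + landen r n) := rfl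

lemma landen_mem_Ioo (hr : r ∈ Set.Ioo (0 : ℝ) 1) (n : ℕ) : landen r n ∈ Set.Ioo (0 : ℝ) 1 := by
  induction n with
  | zero => exact hr
  | succ n ih =>
    rw [landen_succ]
    exact ⟨div_pos (mul_pos two_pos (Real.sqrt_pos.mpr ih.1)) (by linarith [ih.1]),
      two_mul_sqrt_div_one_add_lt_one ih.1.le ih.2.ne⟩

lemma landen_lt_landen_succ (hr : r ∈ Set.Ioo (0 : ℝ) 1) (n : ℕ) : landen r n < landen r (n + 1) :=
  lt_two_mul_sqrt_div_one_add (landen_mem_Ioo hr n).1 (landen_mem_Ioo hr n).2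

lemma one_sub_landen_le (hr : r ∈ Set.Ioo (0 : ℝ) 1) (n : ℕ) : 1 - landen r n ≤ (1 - r) ^ 2 ^ n := by
  induction n with
  | zero => simp [landen]
  | succ n ih =>
    have hx := landen_mem_Ioo hr n
    calc 1 - landen r (n + 1) ≤ (1 - landen r n) ^ 2 :=
          one_sub_two_mul_sqrt_div_one_add_le_sq hx.1.le
      _ ≤ ((1 - r) ^ 2 ^ n) ^ 2 := pow_le_pow_left₀ (by linarith [hx.2]) ih 2
      _ = (1 - r) ^ 2 ^ (n + 1) := by rw [← pow_mul, pow_succ]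

end LandenSequence

theorem landen_strictMono_tendsto_one {r : ℝ} (hr : r ∈ Set.Ioo (0 : ℝ) 1) :
    StrictMono (landen r) ∧
    Filter.Tendsto (landen r) Filter.atTop (nhds 1) := by
  refine ⟨strictMono_nat_of_lt_succ (landen_lt_landen_succ hr), ?_⟩
  have hgeom : Tendsto (fun n : ℕ => (1 - r) ^ 2 ^ n) atTop (𝓝 0) :=
    (tendsto_pow_atTop_nhds_zero_of_lt_one (by linarith [hr.2]) (by linarith [hr.1])).comp
      (tendsto_pow_atTop_atTop_of_one_lt one_lt_two)
  have hdefect : Tendsto (fun n => 1 - landen r n) atTop (𝓝 0) :=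
    squeeze_zero (fun n => by linarith [(landen_mem_Ioo hr n).2]) (one_sub_landen_le hr) hgeom
  simpa using hdefect.const_sub 1
end
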